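/- arXiv:1005.3753 — 5 statements merged into one kernel-verified Lean document; each statement's English description precedes it below -/
import Mathlib

section
/- For every τ ∈ ℂ with Im τ > 0 and every z ∈ ℂ, the Jacobi theta series has the product expansion ϑ(τ,z) = −q^{1/8} ζ^{−1/2} ∏_{n≥1} (1 − q^{n−1}ζ)(1 − q^n ζ^{−1})(1 − q^n), where q^{1/8} = exp(πiτ/4), ζ^{1/2} = exp(πiz), q^n = exp(2πinτ), ζ = exp(2πiz), and the infinite product converges. -/
/-!
Expanding `∏_{j<N} (1 + x q^{2j+1}) (1 + x⁻¹ q^{2j+1})` by the `q`-binomial theorem (after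
writing `1 + x⁻¹ q^{2j+1} = x⁻¹ q^{2j+1} (1 + x q^{-(2j+1)})`) gives the finite triple product
`∑_{|m| ≤ N} [2N, N+m]_{q²} q^{m²} x^m`. As `N → ∞` the Gaussian binomial `[2N, N+m]_{q²}`
tends to `1 / ∏ (1 - q^{2n+2})` and stays bounded, so Tannery's theorem yields
`∑_m q^{m²} x^m = ∏ (1 + x q^{2n+1}) (1 + x⁻¹ q^{2n+1}) (1 - q^{2n+2})` for `‖q‖ < 1`.
The theta identity is the case `q = e^{πiτ}`, `x = -e^{2πiz} / q`, after the shift `m = n + 1`.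
-/

open Complex

/-- The Jacobi theta series
`ϑ(τ,z) = Σ_{n∈ℤ} (−1)^n exp(πi(2n+1)²τ/4 + πi(2n+1)z)`. -/
noncomputable def thetaJ (τ z : ℂ) : ℂ :=
  ∑' n : ℤ, (-1 : ℂ) ^ n *
    Complex.exp (Real.pi * Complex.I * ((2 * n + 1) ^ 2 * τ / 4 + (2 * n + 1) * z))

/-- The factor of the triple product indexed by `n : ℕ` (corresponding to `m = n + 1 ≥ 1`
in the classical formula): `(1 − q^{m−1}ζ)(1 − q^m ζ^{−1})(1 − q^m)`. -/
noncomputable def tripleFactor (τ z : ℂ) (n : ℕ) : ℂ :=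
  (1 - Complex.exp (2 * Real.pi * Complex.I * τ) ^ n * Complex.exp (2 * Real.pi * Complex.I * z)) *
  (1 - Complex.exp (2 * Real.pi * Complex.I * τ) ^ (n + 1) *
      Complex.exp (-(2 * Real.pi * Complex.I * z))) *
  (1 - Complex.exp (2 * Real.pi * Complex.I * τ) ^ (n + 1))

open Finset

lemma prod_range_pow_two_mul_add_one {M : Type*} [CommMonoid M] (q : M) (N : ℕ) :
    ∏ j ∈ range N, q ^ (2 * j + 1) = q ^ (N ^ 2) := by
  rw [prod_pow_eq_pow_sum]
  congr 1
  induction N with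
  | zero => rfl
  | succ N ih => rw [sum_range_succ, ih]; ring

section GaussianBinomial

variable {R : Type*} [CommRing R]

/-- The Gaussian binomial coefficient `[n, k]_p`. -/
def qBinom (p : R) : ℕ → ℕ → R
  | _, 0 => 1
  | 0, _ + 1 => 0
  | n + 1, k + 1 => qBinom p n k + p ^ (k + 1) * qBinom p n (k + 1)

def qPochhammer (p : R) (n : ℕ) : R := ∏ i ∈ range n, (1 - p ^ (i + 1))

variable (p : R)

@[simp] lemma qBinom_zero_right (n : ℕ) : qBinom p n 0 = 1 := by cases n <;> rfl

@[simp] lemma qBinom_zero_succ (k : ℕ) : qBinom p 0 (k + 1) = 0 := rfl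

lemma qBinom_succ_succ (n k : ℕ) :
    qBinom p (n + 1) (k + 1) = qBinom p n k + p ^ (k + 1) * qBinom p n (k + 1) := rfl

lemma qBinom_eq_zero_of_lt {n k : ℕ} (h : n < k) : qBinom p n k = 0 := by
  induction n generalizing k with
  | zero =>
    obtain ⟨k, rfl⟩ := Nat.exists_eq_succ_of_ne_zero h.ne'
    exact qBinom_zero_succ p k
  | succ n ih =>
    obtain ⟨k, rfl⟩ := Nat.exists_eq_succ_of_ne_zero (Nat.ne_zero_of_lt h)
    rw [qBinom_succ_succ, ih (by omega), ih (by omega), mul_zero, add_zero]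

@[simp] lemma qBinom_self (n : ℕ) : qBinom p n n = 1 := by
  induction n with
  | zero => rfl
  | succ n ih =>
    rw [qBinom_succ_succ, ih, qBinom_eq_zero_of_lt p n.lt_succ_self, mul_zero, add_zero]

@[simp] lemma qPochhammer_zero : qPochhammer p 0 = 1 := prod_range_zero _

lemma qPochhammer_succ (n : ℕ) : qPochhammer p (n + 1) = qPochhammer p n * (1 - p ^ (n + 1)) :=
  prod_range_succ _ n

theorem qBinom_add_mul_qPochhammer_mul_qPochhammer (a b : ℕ) :
    qBinom p (a + b) a * qPochhammer p a * qPochhammer p b = qPochhammer p (a + b) := by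
  induction a generalizing b with
  | zero => simp
  | succ a iha =>
    induction b with
    | zero => simp
    | succ b ihb =>
      have h₁ : qBinom p (a + b + 1) a * qPochhammer p a * qPochhammer p (b + 1) =
          qPochhammer p (a + b + 1) := iha (b + 1)
      have h₂ : qBinom p (a + b + 1) (a + 1) * qPochhammer p (a + 1) * qPochhammer p b =
          qPochhammer p (a + b + 1) := by rwa [Nat.add_right_comm] at ihb
      rw [show a + 1 + (b + 1) = a + b + 1 + 1 by omega, qBinom_succ_succ,
        qPochhammer_succ _ (a + b + 1)]
      simp only [qPochhammer_succ p a, qPochhammer_succ p b] at h₁ h₂ ⊢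
      linear_combination (1 - p ^ (a + 1)) * h₁ + p ^ (a + 1) * (1 - p ^ (b + 1)) * h₂

theorem prod_one_add_mul_pow_eq_sum_qBinom (q y : R) (n : ℕ) :
    ∏ i ∈ range n, (1 + y * q ^ (2 * i + 1)) =
      ∑ k ∈ range (n + 1), qBinom (q ^ 2) n k * q ^ (k ^ 2) * y ^ k := by
  induction n generalizing y with
  | zero => simp
  | succ n ih =>
    have hshift (k : ℕ) : 1 + y * q ^ (2 * (k + 1) + 1) = 1 + y * q ^ 2 * q ^ (2 * k + 1) := by
      ring
    rw [prod_range_succ', prod_congr rfl fun k _ => hshift k, ih]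
    calc _ = ∑ k ∈ range (n + 1), qBinom (q ^ 2) n k * q ^ ((k + 1) ^ 2) * y ^ (k + 1)
          + ∑ k ∈ range (n + 2), (q ^ 2) ^ k * qBinom (q ^ 2) n k * q ^ (k ^ 2) * y ^ k := by
          rw [sum_range_succ _ (n + 1), qBinom_eq_zero_of_lt _ n.lt_succ_self]
          simp only [mul_zero, zero_mul, add_zero]
          rw [mul_add, mul_one, sum_mul, add_comm]
          congr 1 <;> refine sum_congr rfl fun k _ => by ring
      _ = _ := by
          rw [sum_range_succ' _ (n + 1), sum_range_succ' _ (n + 1)]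
          simp only [qBinom_succ_succ, qBinom_zero_right, add_mul, sum_add_distrib]
          ring

end GaussianBinomial

section FiniteTripleProduct

variable {K : Type*} [Field K] {q x : K}

lemma prod_range_jacobi_eq_prod_range_two_mul (hq : q ≠ 0) (hx : x ≠ 0) (N : ℕ) :
    ∏ j ∈ range N, ((1 + x * q ^ (2 * j + 1)) * (1 + x⁻¹ * q ^ (2 * j + 1))) =
      x⁻¹ ^ N * q ^ (N ^ 2) *
        ∏ i ∈ range (2 * N), (1 + x * (q ^ (2 * N))⁻¹ * q ^ (2 * i + 1)) := by
  have hlow (j : ℕ) (hj : j ∈ range N) : 1 + x⁻¹ * q ^ (2 * j + 1) =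
      x⁻¹ * q ^ (2 * j + 1) * (1 + x * (q ^ (2 * N))⁻¹ * q ^ (2 * (N - 1 - j) + 1)) := by
    have hpow : q ^ (2 * (N - 1 - j) + 1) * q ^ (2 * j + 1) = q ^ (2 * N) := by
      rw [← pow_add]
      congr 1
      have := mem_range.1 hj
      omega
    field_simp
    linear_combination (-x) * hpow
  have hhigh (i : ℕ) :
      1 + x * (q ^ (2 * N))⁻¹ * q ^ (2 * (N + i) + 1) = 1 + x * q ^ (2 * i + 1) := by
    rw [show 2 * (N + i) + 1 = 2 * N + (2 * i + 1) by ring, pow_add, mul_assoc x,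
      inv_mul_cancel_left₀ (pow_ne_zero _ hq)]
  rw [prod_mul_distrib, prod_congr rfl hlow, prod_mul_distrib, prod_mul_distrib, two_mul N,
    prod_range_add, prod_range_reflect (fun i => 1 + x * (q ^ (N + N))⁻¹ * q ^ (2 * i + 1)),
    prod_const, card_range, prod_range_pow_two_mul_add_one]
  simp only [← two_mul, hhigh]
  ring

theorem finite_jacobi_triple_product (hq : q ≠ 0) (hx : x ≠ 0) (N : ℕ) :
    ∏ j ∈ range N, ((1 + x * q ^ (2 * j + 1)) * (1 + x⁻¹ * q ^ (2 * j + 1))) =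
      ∑ k ∈ range (2 * N + 1),
        qBinom (q ^ 2) (2 * N) k * q ^ (((k : ℤ) - N) ^ 2) * x ^ ((k : ℤ) - N) := by
  rw [prod_range_jacobi_eq_prod_range_two_mul hq hx, prod_one_add_mul_pow_eq_sum_qBinom, mul_sum]
  refine sum_congr rfl fun k _ => ?_
  rw [show ((k : ℤ) - N) ^ 2 = ((k ^ 2 + N ^ 2 : ℕ) : ℤ) - ((2 * N * k : ℕ) : ℤ) by
      push_cast; ring,
    zpow_sub₀ hq, zpow_sub₀ hx, zpow_natCast, zpow_natCast, zpow_natCast, zpow_natCast, mul_pow,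
    inv_pow, inv_pow, ← pow_mul, pow_add]
  field_simp

end FiniteTripleProduct

section Analytic

open Filter Topology

variable {𝕜 : Type*} [NormedField 𝕜] {p q x : 𝕜}

lemma norm_pow_lt_one (hq : ‖q‖ < 1) {n : ℕ} (hn : n ≠ 0) : ‖q ^ n‖ < 1 := by
  rw [norm_pow]
  exact pow_lt_one₀ (norm_nonneg q) hq hn

lemma one_sub_pow_succ_ne_zero (hp : ‖p‖ < 1) (n : ℕ) : 1 - p ^ (n + 1) ≠ 0 := by
  intro h
  have := norm_pow_lt_one hp n.succ_ne_zero
  rw [← sub_eq_zero.1 h, norm_one] at this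
  exact this.false

lemma summable_norm_pow_succ (hp : ‖p‖ < 1) : Summable fun n : ℕ => ‖p ^ (n + 1)‖ := by
  simpa [norm_pow, pow_succ] using
    (summable_geometric_of_lt_one (norm_nonneg p) hp).mul_right ‖p‖

lemma qPochhammer_ne_zero (hp : ‖p‖ < 1) (n : ℕ) : qPochhammer p n ≠ 0 :=
  prod_ne_zero_iff.2 fun i _ => one_sub_pow_succ_ne_zero hp i

lemma qBinom_add_eq_div (hp : ‖p‖ < 1) (a b : ℕ) :
    qBinom p (a + b) a = qPochhammer p (a + b) / (qPochhammer p a * qPochhammer p b) := by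
  rw [eq_div_iff (mul_ne_zero (qPochhammer_ne_zero hp a) (qPochhammer_ne_zero hp b)), ← mul_assoc]
  exact qBinom_add_mul_qPochhammer_mul_qPochhammer p a b

lemma summable_norm_pow_sq_mul_pow (hq : ‖q‖ < 1) (y : 𝕜) :
    Summable fun n : ℕ => ‖q ^ (n ^ 2) * y ^ n‖ := by
  have hsmall : ∀ᶠ n : ℕ in atTop, ‖q ^ n * y‖ ≤ 1 / 2 := by
    have h := ((tendsto_pow_atTop_nhds_zero_of_norm_lt_one hq).mul_const y).norm
    rw [zero_mul, norm_zero] at h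
    exact h.eventually_le_const one_half_pos
  refine .of_norm_bounded_eventually_nat summable_geometric_two ?_
  filter_upwards [hsmall] with n hn
  rw [norm_norm, sq, pow_mul, ← mul_pow, norm_pow]
  exact pow_le_pow_left₀ (norm_nonneg _) hn n

lemma summable_norm_zpow_sq_mul_zpow (hq : ‖q‖ < 1) (x : 𝕜) :
    Summable fun m : ℤ => ‖q ^ (m ^ 2) * x ^ m‖ := by
  refine .of_nat_of_neg ?_ ?_
  · simpa [← zpow_natCast] using summable_norm_pow_sq_mul_pow hq x
  · simpa [← zpow_natCast] using summable_norm_pow_sq_mul_pow hq x⁻¹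

def finiteJacobiTerm (q x : 𝕜) (N : ℕ) (m : ℤ) : 𝕜 :=
  if m.natAbs ≤ N then qBinom (q ^ 2) (2 * N) (N + m).toNat * q ^ (m ^ 2) * x ^ m else 0

lemma tsum_finiteJacobiTerm (hq : q ≠ 0) (hx : x ≠ 0) (N : ℕ) :
    ∑' m, finiteJacobiTerm q x N m =
      ∏ j ∈ range N, ((1 + x * q ^ (2 * j + 1)) * (1 + x⁻¹ * q ^ (2 * j + 1))) := by
  have hinj : Function.Injective fun k : ℕ => (k : ℤ) - N := fun a b h => by simpa using h
  have hsupp :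
      Function.support (finiteJacobiTerm q x N) ⊆ Set.range fun k : ℕ => (k : ℤ) - N := by
    intro m hm
    have hmN : m.natAbs ≤ N := by
      by_contra h
      exact hm (if_neg h)
    exact ⟨(m + N).toNat, by simp only; omega⟩
  rw [← hinj.tsum_eq hsupp, tsum_eq_sum (s := range (2 * N + 1)),
    finite_jacobi_triple_product hq hx]
  · refine sum_congr rfl fun k hk => ?_
    rw [finiteJacobiTerm, if_pos (by have := mem_range.1 hk; omega),
      show ((N : ℤ) + (k - N)).toNat = k by omega]
  · intro k hk
    rw [finiteJacobiTerm, if_neg (by have := mem_range.not.1 hk; omega)]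

variable [CompleteSpace 𝕜]

lemma multipliable_one_sub_pow_succ (hp : ‖p‖ < 1) :
    Multipliable fun n : ℕ => 1 - p ^ (n + 1) := by
  simpa [sub_eq_add_neg] using multipliable_one_add_of_summable (f := fun n => -p ^ (n + 1))
    (by simpa using summable_norm_pow_succ hp)

lemma tprod_one_sub_pow_succ_ne_zero (hp : ‖p‖ < 1) : ∏' n : ℕ, (1 - p ^ (n + 1)) ≠ 0 := by
  simpa [sub_eq_add_neg] using tprod_one_add_ne_zero_of_summable (f := fun n => -p ^ (n + 1))
    (by simpa [← sub_eq_add_neg] using one_sub_pow_succ_ne_zero hp)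
    (by simpa using summable_norm_pow_succ hp)

lemma tendsto_qPochhammer (hp : ‖p‖ < 1) :
    Tendsto (qPochhammer p) atTop (𝓝 (∏' n : ℕ, (1 - p ^ (n + 1)))) :=
  (multipliable_one_sub_pow_succ hp).hasProd.tendsto_prod_nat

lemma exists_norm_qBinom_le (hp : ‖p‖ < 1) : ∃ C, ∀ n k, ‖qBinom p n k‖ ≤ C := by
  obtain ⟨U, hU⟩ := (tendsto_qPochhammer hp).norm.bddAbove_range
  obtain ⟨V, hV⟩ := ((tendsto_qPochhammer hp).norm.inv₀
    (norm_ne_zero_iff.2 (tprod_one_sub_pow_succ_ne_zero hp))).bddAbove_range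
  have hU' (n : ℕ) : ‖qPochhammer p n‖ ≤ U := hU ⟨n, rfl⟩
  have hV' (n : ℕ) : ‖qPochhammer p n‖⁻¹ ≤ V := hV ⟨n, rfl⟩
  have hU0 : 0 ≤ U := (norm_nonneg _).trans (hU' 0)
  have hV0 : 0 ≤ V := (inv_nonneg.2 (norm_nonneg _)).trans (hV' 0)
  refine ⟨U * V * V, fun n k => ?_⟩
  rcases le_or_gt k n with hkn | hnk
  · obtain ⟨b, rfl⟩ := Nat.exists_eq_add_of_le hkn
    rw [qBinom_add_eq_div hp, norm_div, norm_mul, div_eq_mul_inv, mul_inv, ← mul_assoc]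
    exact mul_le_mul (mul_le_mul (hU' _) (hV' _) (by positivity) hU0) (hV' _) (by positivity)
      (mul_nonneg hU0 hV0)
  · rw [qBinom_eq_zero_of_lt p hnk, norm_zero]
    positivity

lemma tendsto_qBinom_two_mul (hp : ‖p‖ < 1) (m : ℤ) :
    Tendsto (fun N : ℕ => qBinom p (2 * N) (N + m).toNat) atTop
      (𝓝 (∏' n : ℕ, (1 - p ^ (n + 1)))⁻¹) := by
  have hP := tendsto_qPochhammer hp
  have hP0 := tprod_one_sub_pow_succ_ne_zero hp
  have hshift (s : ℤ) : Tendsto (fun N : ℕ => (N + s).toNat) atTop atTop :=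
    tendsto_atTop_atTop.2 fun b => ⟨b + s.natAbs, fun N hN => by omega⟩
  have hlim := (hP.comp (tendsto_id.const_mul_atTop' two_pos)).div
    ((hP.comp (hshift m)).mul (hP.comp (hshift (-m)))) (mul_ne_zero hP0 hP0)
  rw [div_mul_eq_div_div, div_self hP0, one_div] at hlim
  refine hlim.congr' ?_
  filter_upwards [eventually_ge_atTop m.natAbs] with N hN
  have h2N : (N + m).toNat + (N + -m).toNat = 2 * N := by omega
  simpa [h2N] using (qBinom_add_eq_div hp (N + m).toNat (N + -m).toNat).symm

lemma tendsto_finiteJacobiTerm (hq : ‖q‖ < 1) (x : 𝕜) (m : ℤ) :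
    Tendsto (fun N => finiteJacobiTerm q x N m) atTop
      (𝓝 ((∏' n : ℕ, (1 - (q ^ 2) ^ (n + 1)))⁻¹ * (q ^ (m ^ 2) * x ^ m))) := by
  have hq2 := norm_pow_lt_one hq two_ne_zero
  refine ((tendsto_qBinom_two_mul hq2 m).mul_const (q ^ (m ^ 2) * x ^ m)).congr' ?_
  filter_upwards [eventually_ge_atTop m.natAbs] with N hN
  rw [finiteJacobiTerm, if_pos (by omega), mul_assoc]

lemma exists_norm_finiteJacobiTerm_le (hq : ‖q‖ < 1) (x : 𝕜) :
    ∃ C, ∀ N m, ‖finiteJacobiTerm q x N m‖ ≤ C * ‖q ^ (m ^ 2) * x ^ m‖ := by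
  have hq2 := norm_pow_lt_one hq two_ne_zero
  obtain ⟨C, hC⟩ := exists_norm_qBinom_le hq2
  refine ⟨C, fun N m => ?_⟩
  unfold finiteJacobiTerm
  split_ifs
  · rw [mul_assoc, norm_mul]
    exact mul_le_mul_of_nonneg_right (hC _ _) (norm_nonneg _)
  · rw [norm_zero]
    exact mul_nonneg ((norm_nonneg _).trans (hC 0 0)) (norm_nonneg _)

lemma multipliable_one_add_mul_pow_two_mul_add_one (hq : ‖q‖ < 1) (x : 𝕜) :
    Multipliable fun n : ℕ => 1 + x * q ^ (2 * n + 1) := by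
  have hq2 := norm_pow_lt_one hq two_ne_zero
  refine multipliable_one_add_of_summable ?_
  simpa [pow_succ, pow_mul] using
    ((summable_geometric_of_lt_one (norm_nonneg _) hq2).mul_right ‖q‖).mul_left ‖x‖

theorem jacobi_triple_product (hq : ‖q‖ < 1) (hq0 : q ≠ 0) (hx : x ≠ 0) :
    Multipliable (fun n : ℕ =>
      (1 + x * q ^ (2 * n + 1)) * (1 + x⁻¹ * q ^ (2 * n + 1)) * (1 - q ^ (2 * n + 2))) ∧
    ∑' m : ℤ, q ^ (m ^ 2) * x ^ m =
      ∏' n : ℕ,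
        ((1 + x * q ^ (2 * n + 1)) * (1 + x⁻¹ * q ^ (2 * n + 1)) * (1 - q ^ (2 * n + 2))) := by
  have hq2 := norm_pow_lt_one hq two_ne_zero
  have hpow (n : ℕ) : (q ^ 2) ^ (n + 1) = q ^ (2 * n + 2) := by ring
  have hF := (multipliable_one_add_mul_pow_two_mul_add_one hq x).mul
    (multipliable_one_add_mul_pow_two_mul_add_one hq x⁻¹)
  have hP : Multipliable fun n : ℕ => 1 - q ^ (2 * n + 2) := by
    simpa only [hpow] using multipliable_one_sub_pow_succ hq2
  have hP0 : ∏' n : ℕ, (1 - q ^ (2 * n + 2)) ≠ 0 := by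
    simpa only [hpow] using tprod_one_sub_pow_succ_ne_zero hq2
  obtain ⟨C, hC⟩ := exists_norm_finiteJacobiTerm_le hq x
  have hlim := tendsto_tsum_of_dominated_convergence
    ((summable_norm_zpow_sq_mul_zpow hq x).mul_left C) (tendsto_finiteJacobiTerm hq x)
    (.of_forall hC)
  simp only [tsum_finiteJacobiTerm hq0 hx, tsum_mul_left, hpow] at hlim
  have hθ := tendsto_nhds_unique hlim hF.hasProd.tendsto_prod_nat
  refine ⟨hF.mul hP, ?_⟩
  rw [hF.tprod_mul hP, ← hθ, mul_comm, mul_inv_cancel_left₀ hP0]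

end Analytic

section ThetaSeries

open scoped Real

lemma norm_cexp_pi_mul_I_mul_lt_one {τ : ℂ} (hτ : 0 < τ.im) : ‖cexp (π * I * τ)‖ < 1 := by
  rw [norm_exp, Real.exp_lt_one_iff]
  simpa using mul_pos Real.pi_pos hτ

lemma tripleFactor_eq {τ z q x : ℂ} (hq : q = cexp (π * I * τ))
    (hx : x = -cexp (2 * π * I * z - π * I * τ)) (n : ℕ) :
    tripleFactor τ z n =
      (1 + x * q ^ (2 * n + 1)) * (1 + x⁻¹ * q ^ (2 * n + 1)) * (1 - q ^ (2 * n + 2)) := by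
  have hq' (k : ℕ) : q ^ k = cexp (k * (π * I * τ)) := by rw [hq, ← exp_nat_mul]
  have e₁ : x * q ^ (2 * n + 1) = -(cexp (2 * π * I * τ) ^ n * cexp (2 * π * I * z)) := by
    rw [hx, hq', ← exp_nat_mul, neg_mul, ← exp_add, ← exp_add]
    congr 2
    push_cast
    ring
  have e₂ : x⁻¹ * q ^ (2 * n + 1) =
      -(cexp (2 * π * I * τ) ^ (n + 1) * cexp (-(2 * π * I * z))) := by
    rw [hx, hq', inv_neg, ← exp_neg, ← exp_nat_mul, neg_mul, ← exp_add, ← exp_add]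
    congr 2
    push_cast
    ring
  have e₃ : q ^ (2 * n + 2) = cexp (2 * π * I * τ) ^ (n + 1) := by
    rw [hq', ← exp_nat_mul]
    congr 1
    push_cast
    ring
  rw [e₁, e₂, e₃, tripleFactor]
  ring

lemma thetaJ_eq_tsum {τ z q x : ℂ} (hq : q = cexp (π * I * τ))
    (hx : x = -cexp (2 * π * I * z - π * I * τ)) :
    thetaJ τ z = -cexp (π * I * τ / 4) * cexp (-(π * I * z)) * ∑' m : ℤ, q ^ (m ^ 2) * x ^ m := by
  rw [thetaJ, ← tsum_mul_left]
  conv_rhs => rw [← (Equiv.addRight (1 : ℤ)).tsum_eq]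
  refine tsum_congr fun n => ?_
  simp only [Equiv.coe_addRight]
  rw [hq, hx, neg_eq_neg_one_mul (cexp (2 * π * I * z - π * I * τ)), mul_zpow,
    zpow_add_one₀ (by norm_num), ← exp_int_mul, ← exp_int_mul]
  calc (-1 : ℂ) ^ n * cexp (π * I * ((2 * n + 1) ^ 2 * τ / 4 + (2 * n + 1) * z))
      = (-1) ^ n * (cexp (π * I * τ / 4) * cexp (-(π * I * z)) *
          cexp (((n + 1) ^ 2 : ℤ) * (π * I * τ)) *
          cexp (((n + 1 : ℤ) : ℂ) * (2 * π * I * z - π * I * τ))) := by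
        simp only [← exp_add]
        congr 2
        push_cast
        ring
    _ = _ := by ring

end ThetaSeries

/-- The Jacobi triple product expansion:
`ϑ(τ,z) = −q^{1/8} ζ^{−1/2} ∏_{n≥1} (1 − q^{n−1}ζ)(1 − q^n ζ^{−1})(1 − q^n)`,
where `q^{1/8} = exp(πiτ/4)` and `ζ^{−1/2} = exp(−πiz)`; the infinite product
converges. -/
theorem statement10 (τ z : ℂ) (hτ : 0 < τ.im) :
    Multipliable (tripleFactor τ z) ∧
    thetaJ τ z = -Complex.exp (Real.pi * Complex.I * τ / 4) *
      Complex.exp (-(Real.pi * Complex.I * z)) * ∏' n : ℕ, tripleFactor τ z n := by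
  obtain ⟨hmult, hsum⟩ := jacobi_triple_product (norm_cexp_pi_mul_I_mul_lt_one hτ)
    (exp_ne_zero _) (neg_ne_zero.2 (exp_ne_zero (2 * Real.pi * I * z - Real.pi * I * τ)))
  have hfactor : tripleFactor τ z = _ := funext (tripleFactor_eq rfl rfl)
  rw [hfactor, thetaJ_eq_tsum rfl rfl, hsum]
  exact ⟨hmult, rfl⟩
end

section
/- The even lattices U(2) ⊕ E_8 and U ⊕ D_8 are isomorphic: there exists a matrix M ∈ GL_{10}(ℤ) such that Mᵀ (G_{U(2)} ⊕ G_{E_8}) M = G_U ⊕ G_{D_8}, where ⊕ denotes block-diagonal sum of Gram matrices. -/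
/-- Block-diagonal (orthogonal) sum of two Gram matrices. -/
def gramSum {m n : ℕ} (A : Matrix (Fin m) (Fin m) ℤ) (B : Matrix (Fin n) (Fin n) ℤ) :
    Matrix (Fin (m + n)) (Fin (m + n)) ℤ :=
  Matrix.reindex finSumFinEquiv finSumFinEquiv (Matrix.fromBlocks A 0 0 B)

/-- Gram matrix of the hyperbolic plane `U`. -/
def gramU : Matrix (Fin 2) (Fin 2) ℤ := !![0, 1; 1, 0]

/-- Gram matrix of `U(2)`. -/
def gramU2 : Matrix (Fin 2) (Fin 2) ℤ := !![0, 2; 2, 0]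

/-- Cartan (Gram) matrix of the root lattice `E_8` (Bourbaki numbering). -/
def gramE8 : Matrix (Fin 8) (Fin 8) ℤ :=
  !![2, 0, -1, 0, 0, 0, 0, 0;
     0, 2, 0, -1, 0, 0, 0, 0;
     -1, 0, 2, -1, 0, 0, 0, 0;
     0, -1, -1, 2, -1, 0, 0, 0;
     0, 0, 0, -1, 2, -1, 0, 0;
     0, 0, 0, 0, -1, 2, -1, 0;
     0, 0, 0, 0, 0, -1, 2, -1;
     0, 0, 0, 0, 0, 0, -1, 2]

/-- Cartan (Gram) matrix of the root lattice `D_8`. -/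
def gramD8 : Matrix (Fin 8) (Fin 8) ℤ :=
  !![2, -1, 0, 0, 0, 0, 0, 0;
     -1, 2, -1, 0, 0, 0, 0, 0;
     0, -1, 2, -1, 0, 0, 0, 0;
     0, 0, -1, 2, -1, 0, 0, 0;
     0, 0, 0, -1, 2, -1, 0, 0;
     0, 0, 0, 0, -1, 2, -1, -1;
     0, 0, 0, 0, 0, -1, 2, 0;
     0, 0, 0, 0, 0, -1, 0, 2]

def isoM : Matrix (Fin 10) (Fin 10) ℤ :=
  !![1, -1, 0, -1, 0, 0, 1, -1, 0, 1;
     -1, 1, 1, 0, 0, 0, -1, 1, 0, -1;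
     -1, 0, -1, 1, -1, 1, -1, 0, 1, -1;
     -1, 0, -1, 1, -1, 1, -1, -1, 3, -1;
     -1, -1, -2, 1, -1, 1, 0, -2, 3, -1;
     -1, -1, -3, 1, -1, 2, -1, -3, 5, -1;
     -1, -1, -2, 1, -1, 2, -1, -3, 4, 0;
     -1, 0, -1, 1, -1, 2, -1, -2, 3, -1;
     0, -1, -1, 0, -1, 2, 0, -2, 2, 0;
     -1, 0, 0, 0, 0, 1, -1, 0, 1, -1]

def isoN : Matrix (Fin 10) (Fin 10) ℤ :=
  !![2, -2, 1, 1, -1, 0, -1, 2, -2, 1;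
     -2, 2, -1, -1, 0, 1, 0, -1, 2, -2;
     1, -1, 0, 1, 0, -1, 0, 1, -1, 1;
     0, -2, 0, 1, 0, -1, 0, 1, -1, 1;
     -1, -1, -1, 0, 0, 0, 0, 0, 0, 1;
     -2, 0, -1, 0, 0, 0, 0, -1, 2, 0;
     -3, 1, -2, 0, 1, 0, 0, -2, 3, -1;
     -2, 0, -1, 1, 0, 0, 0, -2, 2, 0;
     -1, 0, -1, 1, 0, 0, 0, -1, 1, 0;
     -2, 1, -1, 0, 0, 0, 1, -2, 2, -1]

lemma isoNM : isoN * isoM = 1 := by decide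

/-- The even lattices `U(2) ⊕ E_8` and `U ⊕ D_8` are isomorphic: there is
`M ∈ GL_{10}(ℤ)` with `Mᵀ (G_{U(2)} ⊕ G_{E_8}) M = G_U ⊕ G_{D_8}`. -/
theorem statement15 :
    ∃ M : Matrix (Fin 10) (Fin 10) ℤ,
      IsUnit M.det ∧ M.transpose * gramSum gramU2 gramE8 * M = gramSum gramU gramD8 := by
  refine ⟨isoM, Matrix.isUnit_det_of_left_inverse isoNM, ?_⟩
  decide
end

section
/- The even lattices U ⊕ E_6 ⊕ E_6 and U ⊕ E_8 ⊕ A_2 ⊕ A_2 are isomorphic: there exists a matrix M ∈ GL_{14}(ℤ) such that Mᵀ (G_U ⊕ G_{E_6} ⊕ G_{E_6}) M = G_U ⊕ G_{E_8} ⊕ G_{A_2} ⊕ G_{A_2}, where ⊕ denotes block-diagonal sum of Gram matrices. -/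
set_option maxHeartbeats 1000000


/-- Cartan (Gram) matrix of the root lattice `A_2`. -/
def gramA2 : Matrix (Fin 2) (Fin 2) ℤ := !![2, -1; -1, 2]

/-- Cartan (Gram) matrix of the root lattice `E_6` (Bourbaki numbering). -/
def gramE6 : Matrix (Fin 6) (Fin 6) ℤ :=
  !![2, 0, -1, 0, 0, 0;
     0, 2, 0, -1, 0, 0;
     -1, 0, 2, -1, 0, 0;
     0, -1, -1, 2, -1, 0;
     0, 0, 0, -1, 2, -1;
     0, 0, 0, 0, -1, 2]

def matM : Matrix (Fin 14) (Fin 14) ℤ :=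
  !![5, -5, -4, 0, 5, -1, 0, 0, -2, 1, 4, 1, 4, 1;
     -3, 3, 2, 0, -3, 1, 0, 0, 1, -1, -3, 0, -3, 0;
     -1, 1, 1, 0, -2, 1, 0, 0, 0, 0, -1, 0, 0, -1;
     0, 1, 1, 0, -2, 1, 0, 0, 0, 0, 0, 0, 0, 0;
     1, -1, 0, 0, -1, 1, 0, 0, -1, 1, 1, 0, 2, 0;
     -1, 1, 2, 0, -4, 2, 0, 0, 0, 0, 0, 0, 0, 0;
     1, -1, 0, 0, -1, 1, 0, 0, -1, 1, 2, 0, 1, 0;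
     -1, 1, 1, 0, -2, 1, 0, 0, 0, 0, 0, -1, -1, 0;
     -1, 1, 0, -1, -1, 1, 0, 0, 0, 0, -1, 0, -1, 0;
     0, 0, -1, -1, 0, 0, 1, 0, 0, 0, 0, 0, 0, 0;
     1, -1, -2, -2, 1, 1, 0, 0, 0, 0, 1, 0, 1, 0;
     0, 0, -2, -2, 0, 1, 0, 1, 0, 0, 0, 0, 0, 0;
     -1, 1, -1, -1, -1, 1, 0, 0, 1, 0, -1, 0, -1, 0;
     1, -1, -2, 0, 1, 0, 0, 0, 0, 0, 1, 0, 1, 0]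

def matN : Matrix (Fin 14) (Fin 14) ℤ :=
  !![3, -5, 3, 1, -4, 3, -4, 3, 3, 0, -3, 0, 3, -3;
     -3, 5, -3, 1, 4, -4, 4, -3, -3, 0, 3, 0, -3, 3;
     -1, 3, -1, 0, 2, -2, 2, -1, -3, 0, 2, 0, -1, 0;
     -2, 6, -2, 0, 4, -4, 4, -2, -5, 0, 3, 0, -2, 2;
     -4, 10, -4, 0, 7, -7, 7, -4, -8, 0, 6, 0, -4, 3;
     -4, 12, -4, 0, 8, -8, 8, -4, -10, 0, 7, 0, -4, 3;
     -3, 9, -3, 0, 6, -6, 6, -3, -8, 1, 5, 0, -3, 2;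
     -2, 6, -2, 0, 4, -4, 4, -2, -6, 0, 3, 1, -2, 1;
     -1, 3, -1, 0, 2, -2, 2, -1, -4, 0, 2, 0, 0, 0;
     -1, 2, -1, 0, 2, -2, 2, -1, -2, 0, 1, 0, 0, 0;
     -2, 3, -2, 0, 2, -2, 3, -2, -2, 0, 2, 0, -2, 2;
     -1, 2, -1, 0, 1, -1, 2, -2, -1, 0, 1, 0, -1, 1;
     -2, 3, -2, 0, 3, -2, 2, -2, -2, 0, 2, 0, -2, 2;
     -1, 2, -2, 0, 2, -1, 1, -1, -1, 0, 1, 0, -1, 1]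


/-- The even lattices `U ⊕ E_6 ⊕ E_6` and `U ⊕ E_8 ⊕ A_2 ⊕ A_2` are isomorphic: there
is `M ∈ GL_{14}(ℤ)` with `Mᵀ (G_U ⊕ G_{E_6} ⊕ G_{E_6}) M = G_U ⊕ G_{E_8} ⊕ G_{A_2} ⊕ G_{A_2}`. -/
theorem statement16 :
    ∃ M : Matrix (Fin 14) (Fin 14) ℤ,
      IsUnit M.det ∧
        M.transpose * gramSum gramU (gramSum gramE6 gramE6) * M =
          gramSum gramU (gramSum gramE8 (gramSum gramA2 gramA2)) := by
  refine ⟨matM, Matrix.isUnit_det_of_right_inverse (show matM * matN = 1 by decide), by decide⟩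
end

section
/- The even lattices U ⊕ E_7 ⊕ E_7 and U ⊕ E_8 ⊕ D_6 are isomorphic: there exists a matrix M ∈ GL_{16}(ℤ) such that Mᵀ (G_U ⊕ G_{E_7} ⊕ G_{E_7}) M = G_U ⊕ G_{E_8} ⊕ G_{D_6}, where ⊕ denotes block-diagonal sum of Gram matrices. -/
/-- Cartan (Gram) matrix of the root lattice `E_7` (Bourbaki numbering). -/
def gramE7 : Matrix (Fin 7) (Fin 7) ℤ :=
  !![2, 0, -1, 0, 0, 0, 0;
     0, 2, 0, -1, 0, 0, 0;
     -1, 0, 2, -1, 0, 0, 0;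
     0, -1, -1, 2, -1, 0, 0;
     0, 0, 0, -1, 2, -1, 0;
     0, 0, 0, 0, -1, 2, -1;
     0, 0, 0, 0, 0, -1, 2]

/-- Cartan (Gram) matrix of the root lattice `D_6`. -/
def gramD6 : Matrix (Fin 6) (Fin 6) ℤ :=
  !![2, -1, 0, 0, 0, 0;
     -1, 2, -1, 0, 0, 0;
     0, -1, 2, -1, 0, 0;
     0, 0, -1, 2, -1, -1;
     0, 0, 0, -1, 2, 0;
     0, 0, 0, -1, 0, 2]

def M0 : Matrix (Fin 16) (Fin 16) ℤ :=
  !![4, -4, -4, -1, 4, 0, -1, 0, 0, 0, 1, 0, 3, 0, 0, -2;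
     -9, 9, 9, 2, -9, 1, 1, 1, -1, 0, -2, -1, -7, 1, 1, 3;
     1, -1, -1, 1, 1, 0, -1, 0, 0, 0, 0, 1, 0, 0, 0, 0;
     1, -1, -1, 1, 1, 0, -1, 0, 0, 0, 1, 0, 0, 0, 0, 1;
     -2, 2, 2, 3, -2, 0, -1, 0, 0, 0, 0, 0, -2, 0, 0, 2;
     0, 0, 0, 3, 0, 0, -2, 0, 0, 0, 1, 0, -1, 0, 0, 2;
     1, -1, -1, 2, 1, 0, -2, 0, 0, 1, 1, 0, 0, 0, 0, 1;
     2, -2, -2, 1, 2, 0, -2, 0, 1, 0, 1, 0, 1, 0, 0, 0;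
     -1, 1, 1, 1, -1, 0, -1, 1, 0, 0, 0, 0, -1, 0, 0, 1;
     0, -1, 0, 0, 0, 0, 0, 0, 0, 0, -1, 0, 1, 0, 0, 0;
     -1, 1, 1, 0, -2, 1, 0, 0, 0, 0, -2, 0, 0, 0, 0, 1;
     1, -1, 0, 0, 0, 0, 0, 0, 0, 0, -2, 0, 2, 0, 0, 0;
     -2, 2, 3, 0, -3, 1, 0, 0, 0, 0, -4, 0, 0, 0, 0, 2;
     -2, 2, 3, 0, -3, 1, 0, 0, 0, 0, -3, 0, 0, -1, 1, 2;
     2, -2, -1, -1, 1, 1, -1, 0, 0, 0, -1, 0, 3, -1, 0, 0;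
     -2, 2, 3, 0, -3, 1, 0, 0, 0, 0, -1, 0, -1, 0, 0, 1]

def N0 : Matrix (Fin 16) (Fin 16) ℤ :=
  !![9, -4, -4, -2, 5, 0, 0, -4, 4, -1, 0, -3, 2, 4, -8, 6;
     -9, 4, 4, 2, -5, 0, 0, 4, -4, -1, 0, 4, -2, -4, 8, -6;
     3, -1, -1, 1, 3, -2, 0, -1, 1, 0, -1, -1, 1, 1, -2, 2;
     1, 0, 0, 2, 3, -3, 0, 0, 0, 0, 0, 0, 0, 0, 0, 0;
     -3, 2, 2, 4, 1, -4, 0, 2, -2, 0, -1, 1, 0, -2, 4, -3;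
     0, 1, 1, 5, 4, -6, 0, 1, -1, 0, 0, 0, 0, -1, 2, -1;
     1, 0, 0, 4, 4, -5, 0, 0, 0, 0, 0, 0, 0, 0, 0, 0;
     1, 0, 0, 3, 3, -4, 0, 0, 1, 0, 0, 0, 0, 0, 0, 0;
     0, 0, 0, 2, 2, -3, 0, 1, 0, 0, 0, 0, 0, 0, 0, 0;
     0, 0, 0, 1, 1, -2, 1, 0, 0, 0, 0, 0, 0, 0, 0, 0;
     -7, 3, 3, 2, -4, 0, 0, 3, -3, 0, 0, 3, -2, -3, 6, -4;
     -12, 5, 6, 3, -7, 0, 0, 5, -5, 0, 0, 5, -3, -5, 10, -7;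
     -16, 7, 7, 4, -9, 0, 0, 7, -7, 0, 0, 7, -4, -7, 14, -10;
     -13, 6, 6, 4, -8, 0, 0, 6, -6, 0, 0, 6, -3, -6, 11, -8;
     -6, 3, 3, 2, -4, 0, 0, 3, -3, 0, 0, 3, -2, -2, 5, -4;
     -5, 2, 2, 2, -3, 0, 0, 2, -2, 0, 0, 2, -1, -2, 4, -3]

set_option maxHeartbeats 4000000 in
/-- The even lattices `U ⊕ E_7 ⊕ E_7` and `U ⊕ E_8 ⊕ D_6` are isomorphic: there is
`M ∈ GL_{16}(ℤ)` with `Mᵀ (G_U ⊕ G_{E_7} ⊕ G_{E_7}) M = G_U ⊕ G_{E_8} ⊕ G_{D_6}`. -/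
theorem statement17 :
    ∃ M : Matrix (Fin 16) (Fin 16) ℤ,
      IsUnit M.det ∧
        M.transpose * gramSum gramU (gramSum gramE7 gramE7) * M =
          gramSum gramU (gramSum gramE8 gramD6) := by
  refine ⟨M0, Matrix.isUnit_det_of_right_inverse (B := N0) (by decide), by decide⟩
end

section
/- Let L be a nondegenerate even lattice of rank n and let h ∈ L be a primitive vector with (h,h) = 2d ≠ 0. Let L_h = {x ∈ L : (x,h) = 0} be the orthogonal complement of h in L, a free ℤ-module of rank n − 1 with the induced bilinear form. Then |det L_h| = |2d| · |det L| / div(h)², where det L (resp. det L_h) is the determinant of the Gram matrix of any ℤ-basis of L (resp. L_h) and div(h) is the positive generator of the ideal (h, L) ⊆ ℤ. -/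
/-!
Choose `x₀` with `(h, x₀) = div(h)`. Since `div(h)` divides every `(h, x)`, `x₀` followed by a
basis `c` of `L_h` is a basis of `L`, so its Gram determinant is `det L`. Replacing `x₀` by
`h = k x₀ + (an element of L_h)`, where `2d = div(h) k`, multiplies the Gram determinant by `k²`;
on the other hand the Gram matrix of `(h, c)` has first row `(2d, 0, …, 0)`, so its determinant
is `2d · det L_h`.
Hence `2d · det L_h = k² · det L`, i.e. `det L_h · div(h)² = 2d · det L`.
-/

open Matrix Module

section Gram

variable {R M : Type*} [CommRing R] [AddCommGroup M] [Module R M] {ι κ : Type*} [Fintype ι]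

def gramMatrix (B : M →ₗ[R] M →ₗ[R] R) (v : κ → M) : Matrix κ κ R :=
  .of fun i j => B (v i) (v j)

theorem gramMatrix_eq_toMatrix_mul (B : M →ₗ[R] M →ₗ[R] R) (e : Basis ι R M) (v : κ → M) :
    gramMatrix B v = (e.toMatrix v)ᵀ * gramMatrix B e * e.toMatrix v := by
  ext i j
  conv_lhs => rw [gramMatrix, of_apply, ← e.sum_repr (v i), ← e.sum_repr (v j)]
  simp only [map_sum, map_smul, LinearMap.sum_apply, LinearMap.smul_apply, smul_eq_mul,
    Matrix.mul_apply, Finset.sum_mul, Finset.mul_sum, transpose_apply, Basis.toMatrix_apply,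
    gramMatrix, of_apply]
  exact Finset.sum_congr rfl fun _ _ => Finset.sum_congr rfl fun _ _ => by ring

end Gram

theorem Module.Basis.det_toMatrix_update_self {R M ι : Type*} [CommRing R] [AddCommGroup M]
    [Module R M] [Fintype ι] [DecidableEq ι] (e : Basis ι R M) (i : ι) (y : M) :
    (e.toMatrix (Function.update e i y)).det = e.repr y i := by
  rw [Basis.toMatrix_update, Basis.toMatrix_self, ← cramer_apply, cramer_one]
  rfl

theorem Matrix.det_eq_mul_det_submatrix_succ_of_row_zero {R : Type*} [CommRing R] {m : ℕ}
    (A : Matrix (Fin (m + 1)) (Fin (m + 1)) R) (hA : ∀ j : Fin m, A 0 j.succ = 0) :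
    A.det = A 0 0 * (A.submatrix Fin.succ Fin.succ).det := by
  rw [det_succ_row_zero, Fin.sum_univ_succ]
  simp [hA]

theorem det_gramMatrix_basis_eq {M : Type*} [AddCommGroup M]
    {ι ι' : Type*} [Fintype ι] [Fintype ι'] [DecidableEq ι] [DecidableEq ι']
    (B : M →ₗ[ℤ] M →ₗ[ℤ] ℤ) (e : Basis ι ℤ M) (e' : Basis ι' ℤ M) :
    (gramMatrix B e').det = (gramMatrix B e).det := by
  set σ := e'.indexEquiv e
  have hreindex : (gramMatrix B e').det = (gramMatrix B (e'.reindex σ)).det := by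
    rw [← det_submatrix_equiv_self σ.symm]
    congr 1
    ext i j
    simp [gramMatrix]
  have hunit : IsUnit (e.toMatrix (e'.reindex σ)).det :=
    isUnit_det_of_right_inverse (e.toMatrix_mul_toMatrix_flip _)
  rw [hreindex, gramMatrix_eq_toMatrix_mul B e, det_mul, det_mul, det_transpose,
    mul_right_comm, Int.isUnit_mul_self hunit, one_mul]

namespace Module.Basis

variable {R M : Type*} [CommRing R] [NoZeroDivisors R] [AddCommGroup M] [Module R M]
  (φ : M →ₗ[R] R) {x₀ : M} (hx₀ : φ x₀ ≠ 0) (hdvd : ∀ x, φ x₀ ∣ φ x) {m : ℕ}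
  (c : Basis (Fin m) R (LinearMap.ker φ))

noncomputable def consKer : Basis (Fin (m + 1)) R M :=
  mkFinCons x₀ c
    (fun a x hx hax => by
      have := congrArg φ hax
      rw [map_add, map_smul, LinearMap.mem_ker.mp hx, smul_eq_mul, add_zero, map_zero] at this
      exact (mul_eq_zero.mp this).resolve_right hx₀)
    (fun z => by
      obtain ⟨q, hq⟩ := hdvd z
      refine ⟨-q, LinearMap.mem_ker.mpr ?_⟩
      rw [map_add, map_smul, hq, smul_eq_mul]
      ring)

theorem coe_consKer : ⇑(consKer φ hx₀ hdvd c) = Fin.cons x₀ fun i => (c i : M) :=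
  coe_mkFinCons _ _ _ _

theorem repr_consKer_zero_mul (y : M) : (consKer φ hx₀ hdvd c).repr y 0 * φ x₀ = φ y := by
  conv_rhs => rw [← (consKer φ hx₀ hdvd c).sum_repr y]
  simp [coe_consKer, Fin.sum_univ_succ]

end Module.Basis

theorem det_gramMatrix_ker_mul_sq {M : Type*} [AddCommGroup M] {ι : Type*} [Fintype ι]
    [DecidableEq ι] (B : M →ₗ[ℤ] M →ₗ[ℤ] ℤ) (e : Basis ι ℤ M) (h x₀ : M) (hx₀ : B h x₀ ≠ 0)
    (hdvd : ∀ x, B h x₀ ∣ B h x) {m : ℕ} (c : Basis (Fin m) ℤ (LinearMap.ker (B h))) :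
    B h h * (gramMatrix B fun i => (c i : M)).det * B h x₀ ^ 2 =
      B h h ^ 2 * (gramMatrix B e).det := by
  obtain ⟨k, hk⟩ := hdvd h
  let b' := Basis.consKer (B h) hx₀ hdvd c
  let f : Fin (m + 1) → M := Fin.cons h fun i => (c i : M)
  have hdetT : (b'.toMatrix f).det = k := by
    have hf : f = Function.update b' 0 h := by rw [Basis.coe_consKer, Fin.update_cons_zero]
    rw [hf, Basis.det_toMatrix_update_self]
    exact mul_right_cancel₀ hx₀ (by rw [Basis.repr_consKer_zero_mul, hk, mul_comm])
  have hGf : (gramMatrix B f).det = B h h * (gramMatrix B fun i => (c i : M)).det :=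
    det_eq_mul_det_submatrix_succ_of_row_zero (gramMatrix B f)
      fun j => LinearMap.mem_ker.mp (c j).2
  have key : B h h * (gramMatrix B fun i => (c i : M)).det = k * k * (gramMatrix B e).det := by
    rw [← hGf, gramMatrix_eq_toMatrix_mul B b', det_mul, det_mul, det_transpose, hdetT,
      det_gramMatrix_basis_eq B e b']
    ring
  rw [key, hk]
  ring

theorem statement18_general {L : Type*} [AddCommGroup L] [Module ℤ L]
    (n : ℕ) (b : Module.Basis (Fin n) ℤ L)
    (B : L →ₗ[ℤ] L →ₗ[ℤ] ℤ)
    (h : L)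
    (d : ℤ) (hd : d ≠ 0) (hhh : B h h = 2 * d)
    (c : Module.Basis (Fin (n - 1)) ℤ (LinearMap.ker (B h)))
    (dv : ℤ) (hdv : 0 < dv) (hdvd : ∀ x : L, dv ∣ B h x) (hgen : ∃ x : L, B h x = dv) :
    ((|(Matrix.of fun i j => B (c i : L) (c j : L)).det| : ℤ) : ℚ) =
      ((|2 * d| * |(Matrix.of fun i j => B (b i) (b j)).det| : ℤ) : ℚ) / ((dv : ℚ) ^ 2) := by
  -- `c` is a basis for `AddCommGroup.toIntModule`, not for the structure induced from `L`.
  obtain rfl : ‹Module ℤ L› = AddCommGroup.toIntModule L := Subsingleton.elim _ _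
  obtain ⟨x₀, rfl⟩ := hgen
  have hGc : (gramMatrix B fun i => (c i : L)).det * B h x₀ ^ 2 =
      2 * d * (gramMatrix B b).det := by
    refine mul_left_cancel₀ (mul_ne_zero two_ne_zero hd) ?_
    rw [← mul_assoc, ← hhh, det_gramMatrix_ker_mul_sq B b h x₀ hdv.ne' hdvd c]
    ring
  have habs := congrArg abs hGc
  rw [abs_mul, abs_mul, abs_pow, abs_of_pos hdv] at habs
  rw [eq_div_iff (by positivity)]
  exact_mod_cast habs

/-- Let `L` be a nondegenerate even lattice of rank `n` (with `ℤ`-basis `b`) and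
`h ∈ L` a primitive vector with `(h,h) = 2d ≠ 0`. Let `L_h = {x ∈ L : (x,h) = 0}`
be the orthogonal complement of `h`, with `ℤ`-basis `c` indexed by `Fin (n−1)`.
Then `|det L_h| = |2d| · |det L| / div(h)²`, where `div(h)` is the positive generator
of the ideal `(h, L) ⊆ ℤ` and the determinants are those of the Gram matrices of the
bases. -/
theorem statement18 {L : Type*} [AddCommGroup L] [Module ℤ L]
    (n : ℕ) (b : Module.Basis (Fin n) ℤ L)
    (B : L →ₗ[ℤ] L →ₗ[ℤ] ℤ)
    (hsymm : ∀ x y : L, B x y = B y x)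
    (hnondeg : ∀ x : L, (∀ y : L, B x y = 0) → x = 0)
    (heven : ∀ x : L, 2 ∣ B x x)
    (h : L)
    (hprim : ∀ a : ℤ, a ≠ 0 → ∀ x : L, (∃ e : ℤ, a • x = e • h) → ∃ c : ℤ, x = c • h)
    (d : ℤ) (hd : d ≠ 0) (hhh : B h h = 2 * d)
    (c : Module.Basis (Fin (n - 1)) ℤ (LinearMap.ker (B h)))
    (dv : ℤ) (hdv : 0 < dv) (hdvd : ∀ x : L, dv ∣ B h x) (hgen : ∃ x : L, B h x = dv) :
    ((|(Matrix.of fun i j => B (c i : L) (c j : L)).det| : ℤ) : ℚ) =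
      ((|2 * d| * |(Matrix.of fun i j => B (b i) (b j)).det| : ℤ) : ℚ) / ((dv : ℚ) ^ 2) :=
  statement18_general n b B h d hd hhh c dv hdv hdvd hgen
end
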